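/- Let x₁,...,x_T be vectors in ℝ^d and let H be a real symmetric positive definite d×d matrix. Define A_t = H + ∑_{s=1}^t x_s x_sᵀ. Then ∑_{t=1}^T min(x_tᵀ A_{t-1}⁻¹ x_t, 1) ≤ 2·(log det(A_T) − log det(H)). -/

import Mathlib

open Matrix Finset

/-!
Each rank-one update multiplies the determinant by `1 + x_tᵀ A_{t-1}⁻¹ x_t` (matrix determinant
lemma), so `log det A_T - log det H` telescopes into `∑ log (1 + x_tᵀ A_{t-1}⁻¹ x_t)`; termwise,
`min u 1 ≤ 2 log (1 + u)` for `u ≥ 0`.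
-/

theorem Real.min_one_le_two_mul_log_one_add {u : ℝ} (hu : 0 ≤ u) :
    min u 1 ≤ 2 * Real.log (1 + u) := by
  have hmin : min u 1 ≤ 2 * (2 * u / (u + 2)) := by
    rw [mul_div_assoc', le_div_iff₀ (by linarith)]
    rcases le_total u 1 with h | h
    · rw [min_eq_left h]; nlinarith
    · rw [min_eq_right h]; linarith
  linarith [Real.le_log_one_add_of_nonneg hu]

namespace Matrix

section CommRing

variable {m α : Type*} [Fintype m] [DecidableEq m] [CommRing α]

theorem det_one_add_vecMulVec (u v : m → α) : det (1 + vecMulVec u v) = 1 + v ⬝ᵥ u := by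
  rw [vecMulVec_eq Unit, det_one_add_replicateCol_mul_replicateRow]

theorem det_add_vecMulVec {A : Matrix m m α} (hA : IsUnit A.det) (u v : m → α) :
    det (A + vecMulVec u v) = det A * (1 + v ⬝ᵥ (A⁻¹ *ᵥ u)) := by
  have hfactor : A + vecMulVec u v = A * (1 + vecMulVec (A⁻¹ *ᵥ u) v) := by
    rw [Matrix.mul_add, Matrix.mul_one, mul_vecMulVec, mulVec_mulVec, mul_nonsing_inv _ hA,
      one_mulVec]
  rw [hfactor, det_mul, det_one_add_vecMulVec]

end CommRing

variable {n : Type*} [Fintype n]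

theorem PosDef.add_sum_vecMulVec_self {ι : Type*} {H : Matrix n n ℝ} (hH : H.PosDef)
    (s : Finset ι) (x : ι → n → ℝ) : (H + ∑ i ∈ s, vecMulVec (x i) (x i)).PosDef :=
  hH.add_posSemidef <| posSemidef_sum s fun i _ => by
    simpa using posSemidef_vecMulVec_self_star (x i)

variable [DecidableEq n]

theorem PosDef.dotProduct_inv_mulVec_self_nonneg {A : Matrix n n ℝ} (hA : A.PosDef)
    (v : n → ℝ) : 0 ≤ v ⬝ᵥ (A⁻¹ *ᵥ v) := by
  simpa using hA.inv.posSemidef.dotProduct_mulVec_nonneg v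

theorem PosDef.log_det_add_vecMulVec_self {A : Matrix n n ℝ} (hA : A.PosDef) (v : n → ℝ) :
    Real.log (A + vecMulVec v v).det = Real.log A.det + Real.log (1 + v ⬝ᵥ (A⁻¹ *ᵥ v)) := by
  rw [det_add_vecMulVec hA.det_pos.ne'.isUnit,
    Real.log_mul hA.det_pos.ne' (by linarith [hA.dotProduct_inv_mulVec_self_nonneg v])]

end Matrix

theorem elliptic_potential (d T : ℕ) (x : ℕ → Fin d → ℝ)
    (H : Matrix (Fin d) (Fin d) ℝ) (hH : H.PosDef)
    (A : ℕ → Matrix (Fin d) (Fin d) ℝ)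
    (hA : ∀ t, A t = H + ∑ s ∈ Finset.range t, vecMulVec (x s) (x s)) :
    ∑ t ∈ Finset.range T, min (x t ⬝ᵥ ((A t)⁻¹ *ᵥ x t)) 1 ≤
      2 * (Real.log (A T).det - Real.log H.det) := by
  have hApos (t : ℕ) : (A t).PosDef := hA t ▸ hH.add_sum_vecMulVec_self _ x
  have hstep (t : ℕ) : A (t + 1) = A t + vecMulVec (x t) (x t) := by
    rw [hA, hA, sum_range_succ, add_assoc]
  calc ∑ t ∈ range T, min (x t ⬝ᵥ ((A t)⁻¹ *ᵥ x t)) 1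
      ≤ ∑ t ∈ range T, 2 * (Real.log (A (t + 1)).det - Real.log (A t).det) := by
        refine sum_le_sum fun t _ => ?_
        rw [hstep, (hApos t).log_det_add_vecMulVec_self, add_sub_cancel_left]
        exact Real.min_one_le_two_mul_log_one_add ((hApos t).dotProduct_inv_mulVec_self_nonneg _)
    _ = 2 * (Real.log (A T).det - Real.log H.det) := by
        rw [← mul_sum, sum_range_sub (fun t => Real.log (A t).det), hA 0, sum_range_zero, add_zero]
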